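/- Let L : ℝ^D → ℝ be twice continuously differentiable, η > 0, let φ(θ) = θ − η∇L(θ) be the gradient descent map, and let θ* be a strict local minimum of L, i.e., ∇L(θ*) = 0 and the Hessian Hess L(θ*) is positive definite. Let ρ(Dφ(θ*)) denote the spectral radius of the Jacobian Dφ(θ*) = I_D − η·Hess L(θ*). If ρ(Dφ(θ*)) < 1, then θ* is locally Milnor stable; conversely, if θ* is locally Milnor stable, then ρ(Dφ(θ*)) ≤ 1. -/

import Mathlib

open MeasureTheory Filter

/-- The Hessian matrix of a scalar function on Euclidean space, via the second iterated
Fréchet derivative in the coordinate directions. -/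
noncomputable def hessE {D : ℕ} (L : EuclideanSpace ℝ (Fin D) → ℝ)
    (θ : EuclideanSpace ℝ (Fin D)) : Matrix (Fin D) (Fin D) ℝ :=
  Matrix.of fun i j =>
    iteratedFDeriv ℝ 2 L θ ![EuclideanSpace.single i (1:ℝ), EuclideanSpace.single j (1:ℝ)]

/-- The spectral radius of a real square matrix: the maximum of the absolute values of
its complex eigenvalues. -/
noncomputable def matSpecRad {n : ℕ} (M : Matrix (Fin n) (Fin n) ℝ) : ℝ :=
  sSup ((fun z : ℂ => ‖z‖) '' spectrum ℂ (M.map fun a => (a : ℂ)))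

/-- A fixed point `θ` of `φ` is locally Milnor stable if, for every open neighborhood `U`
of `θ`, the set of initializations in `U` whose iterates stay in `U` forever and converge
to `θ` has positive Lebesgue measure. -/
def LocallyMilnorStable {D : ℕ} (φ : EuclideanSpace ℝ (Fin D) → EuclideanSpace ℝ (Fin D))
    (θ : EuclideanSpace ℝ (Fin D)) : Prop :=
  ∀ U : Set (EuclideanSpace ℝ (Fin D)), IsOpen U → θ ∈ U →
    0 < volume {θ₀ : EuclideanSpace ℝ (Fin D) |
      θ₀ ∈ U ∧ (∀ n : ℕ, φ^[n] θ₀ ∈ U) ∧ Tendsto (fun n => φ^[n] θ₀) atTop (nhds θ)}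

section AuxLemmas

open Matrix Metric Set

variable {D : ℕ}

private lemma spec_bridge {D : ℕ} (M : Matrix (Fin D) (Fin D) ℝ) (hM : M.IsHermitian) :
    spectrum ℂ (M.map fun a => (a : ℂ)) = Set.range (fun i => ((hM.eigenvalues i : ℝ) : ℂ)) := by
  classical
  set f : ℝ →+* ℂ := Complex.ofRealHom with hf
  have hstar : ∀ x : ℝ, f (star x) = star (f x) := by
    intro x; simp [hf]
  set V : Matrix (Fin D) (Fin D) ℝ :=
    (Matrix.IsHermitian.eigenvectorUnitary hM : Matrix (Fin D) (Fin D) ℝ) with hV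
  have hVmem := (Matrix.IsHermitian.eigenvectorUnitary hM).2
  have hspec := hM.spectral_theorem
  have hdmap : (Matrix.diagonal (RCLike.ofReal ∘ hM.eigenvalues)).map f
      = Matrix.diagonal (fun i => ((hM.eigenvalues i : ℝ) : ℂ)) := by
    rw [Matrix.diagonal_map (map_zero f)]
    congr 1
  have hstarmap : (star V).map f = star (V.map f) := by
    simp only [Matrix.star_eq_conjTranspose]
    rw [Matrix.conjTranspose_map f hstar]
  have hunit1 : (V.map f) * star (V.map f) = 1 := by
    rw [← hstarmap, ← Matrix.map_mul]
    have : V * star V = 1 := Matrix.mem_unitaryGroup_iff.mp hVmem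
    rw [this]; simp
  have hunit2 : star (V.map f) * (V.map f) = 1 := by
    rw [← hstarmap, ← Matrix.map_mul]
    have : star V * V = 1 := Matrix.mem_unitaryGroup_iff'.mp hVmem
    rw [this]; simp
  set u : (Matrix (Fin D) (Fin D) ℂ)ˣ := ⟨V.map f, star (V.map f), hunit1, hunit2⟩ with hu
  have hMc : M.map (fun a => (a : ℂ)) =
      (u : Matrix (Fin D) (Fin D) ℂ) * Matrix.diagonal (fun i => ((hM.eigenvalues i : ℝ) : ℂ))
        * ((u⁻¹ : (Matrix (Fin D) (Fin D) ℂ)ˣ) : Matrix (Fin D) (Fin D) ℂ) := by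
    have h0 : M.map (fun a => (a : ℂ)) = M.map f := rfl
    rw [h0]
    conv_lhs => rw [hspec, Unitary.conjStarAlgAut_apply]
    rw [← hV, Matrix.map_mul, Matrix.map_mul, hdmap, hstarmap]
    rfl
  rw [hMc, spectrum.units_conjugate, spectrum_diagonal]

private lemma matSpecRad_eq {D : ℕ} (M : Matrix (Fin D) (Fin D) ℝ) (hM : M.IsHermitian) :
    matSpecRad M = sSup (Set.range (fun i => |hM.eigenvalues i|)) := by
  rw [matSpecRad, spec_bridge M hM, ← Set.range_comp]
  congr 1
  ext x
  simp [Function.comp, Complex.norm_real]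

private lemma matSpecRad_ge {D : ℕ} (M : Matrix (Fin D) (Fin D) ℝ) (hM : M.IsHermitian)
    (i : Fin D) : |hM.eigenvalues i| ≤ matSpecRad M := by
  rw [matSpecRad_eq M hM]
  exact le_csSup (Set.finite_range _).bddAbove ⟨i, rfl⟩

private lemma matSpecRad_le {D : ℕ} (M : Matrix (Fin D) (Fin D) ℝ) (hM : M.IsHermitian) {r : ℝ}
    (hr : 0 ≤ r) (h : ∀ i, |hM.eigenvalues i| ≤ r) : matSpecRad M ≤ r := by
  rw [matSpecRad_eq M hM]
  exact Real.sSup_le (by rintro x ⟨i, rfl⟩; exact h i) hr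

private lemma herm_repr {D : ℕ} (M : Matrix (Fin D) (Fin D) ℝ) (hM : M.IsHermitian)
    (x : EuclideanSpace ℝ (Fin D)) (i : Fin D) :
    hM.eigenvectorBasis.repr ((WithLp.equiv 2 _).symm (M.mulVec x)) i
      = hM.eigenvalues i * hM.eigenvectorBasis.repr x i := by
  classical
  rw [OrthonormalBasis.repr_apply_apply, OrthonormalBasis.repr_apply_apply]
  have hsym : Mᵀ = M := by
    have h : Mᴴ = M := hM
    rwa [Matrix.conjTranspose_eq_transpose_of_trivial] at h
  calc inner ℝ (hM.eigenvectorBasis i) ((WithLp.equiv 2 _).symm (M.mulVec x))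
      = ⇑(hM.eigenvectorBasis i) ⬝ᵥ (M.mulVec x) := by
        rw [PiLp.inner_apply]; simp [dotProduct, mul_comm]
    _ = (M.mulVec ⇑(hM.eigenvectorBasis i)) ⬝ᵥ x := by
        rw [Matrix.dotProduct_mulVec, ← Matrix.mulVec_transpose, hsym]
    _ = hM.eigenvalues i * (⇑(hM.eigenvectorBasis i) ⬝ᵥ x) := by
        rw [hM.mulVec_eigenvectorBasis, smul_dotProduct]; rfl
    _ = hM.eigenvalues i * inner ℝ (hM.eigenvectorBasis i) x := by
        rw [PiLp.inner_apply]; simp [dotProduct, mul_comm]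

private lemma grad_contDiff (L : EuclideanSpace ℝ (Fin D) → ℝ) (hL : ContDiff ℝ 2 L) :
    ContDiff ℝ 1 (gradient L) := by
  have h : gradient L = fun θ =>
      (InnerProductSpace.toDual ℝ (EuclideanSpace ℝ (Fin D))).symm (fderiv ℝ L θ) := rfl
  rw [h]
  exact (InnerProductSpace.toDual ℝ _).symm.contDiff.comp (hL.fderiv_right (by norm_num))

private lemma grad_fderiv_inner (L : EuclideanSpace ℝ (Fin D) → ℝ) (hL : ContDiff ℝ 2 L)
    (θs : EuclideanSpace ℝ (Fin D)) (v u : EuclideanSpace ℝ (Fin D)) :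
    inner ℝ (fderiv ℝ (gradient L) θs v) u = fderiv ℝ (fderiv ℝ L) θs v u := by
  have hfun : (fderiv ℝ L) = fun θ =>
      (InnerProductSpace.toDual ℝ (EuclideanSpace ℝ (Fin D))) (gradient L θ) := by
    funext θ
    exact ((InnerProductSpace.toDual ℝ _).apply_symm_apply (fderiv ℝ L θ)).symm
  rw [hfun]
  have hdiff : DifferentiableAt ℝ (gradient L) θs :=
    ((grad_contDiff L hL).differentiable one_ne_zero) θs
  have := (InnerProductSpace.toDual ℝ
    (EuclideanSpace ℝ (Fin D))).toContinuousLinearEquiv.comp_fderiv (f := gradient L) (x := θs)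
  rw [show (fun θ => (InnerProductSpace.toDual ℝ (EuclideanSpace ℝ (Fin D))) (gradient L θ))
      = ⇑(InnerProductSpace.toDual ℝ
          (EuclideanSpace ℝ (Fin D))).toContinuousLinearEquiv ∘ gradient L from rfl,
    this]
  simp [InnerProductSpace.toDual_apply_apply]

private lemma hessE_eq (L : EuclideanSpace ℝ (Fin D) → ℝ) (θs : EuclideanSpace ℝ (Fin D))
    (i j : Fin D) :
    hessE L θs i j = fderiv ℝ (fderiv ℝ L) θs (EuclideanSpace.single i (1:ℝ))
      (EuclideanSpace.single j (1:ℝ)) := by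
  rw [hessE]
  rw [show (Matrix.of fun i j => iteratedFDeriv ℝ 2 L θs
    ![EuclideanSpace.single i (1:ℝ), EuclideanSpace.single j (1:ℝ)]) i j
    = iteratedFDeriv ℝ 2 L θs
        ![EuclideanSpace.single i (1:ℝ), EuclideanSpace.single j (1:ℝ)] from rfl]
  rw [iteratedFDeriv_two_apply]
  simp

private lemma hessE_symm (L : EuclideanSpace ℝ (Fin D) → ℝ) (hL : ContDiff ℝ 2 L)
    (θs : EuclideanSpace ℝ (Fin D)) (i j : Fin D) :
    hessE L θs i j = hessE L θs j i := by
  rw [hessE_eq, hessE_eq]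
  exact (hL.contDiffAt.isSymmSndFDerivAt (by norm_num)) _ _

private lemma grad_fderiv_apply (L : EuclideanSpace ℝ (Fin D) → ℝ) (hL : ContDiff ℝ 2 L)
    (θs : EuclideanSpace ℝ (Fin D)) (w : EuclideanSpace ℝ (Fin D)) (i : Fin D) :
    (fderiv ℝ (gradient L) θs w) i = ∑ j, hessE L θs i j * w j := by
  have h1 : (fderiv ℝ (gradient L) θs w) i
      = inner ℝ (fderiv ℝ (gradient L) θs w) (EuclideanSpace.single i (1:ℝ)) := by
    rw [PiLp.inner_apply]
    simp [EuclideanSpace.single_apply]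
  rw [h1, grad_fderiv_inner L hL]
  have hdecomp : w = ∑ j, w j • EuclideanSpace.single j (1:ℝ) := by
    have h2 := (EuclideanSpace.basisFun (Fin D) ℝ).sum_repr w
    simpa [EuclideanSpace.basisFun_apply, EuclideanSpace.basisFun_repr] using h2.symm
  conv_lhs => rw [hdecomp]
  rw [map_sum, ContinuousLinearMap.sum_apply]
  refine Finset.sum_congr rfl fun j _ => ?_
  rw [_root_.map_smul, ContinuousLinearMap.smul_apply, smul_eq_mul, mul_comm, ← hessE_eq,
    hessE_symm L hL θs]

private lemma phi_matrix (L : EuclideanSpace ℝ (Fin D) → ℝ) (hL : ContDiff ℝ 2 L)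
    (θs : EuclideanSpace ℝ (Fin D)) (η : ℝ) (w : EuclideanSpace ℝ (Fin D)) :
    w - η • fderiv ℝ (gradient L) θs w
      = (WithLp.equiv 2 _).symm
        (((1 : Matrix (Fin D) (Fin D) ℝ) - η • hessE L θs).mulVec w) := by
  ext i
  rw [Matrix.sub_mulVec, Matrix.one_mulVec, Matrix.smul_mulVec]
  show w i - η * (fderiv ℝ (gradient L) θs w) i = w i - η * ((hessE L θs).mulVec w) i
  rw [grad_fderiv_apply L hL]
  rfl

private lemma M_herm (L : EuclideanSpace ℝ (Fin D) → ℝ) (hL : ContDiff ℝ 2 L)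
    (θs : EuclideanSpace ℝ (Fin D)) (η : ℝ) :
    ((1 : Matrix (Fin D) (Fin D) ℝ) - η • hessE L θs).IsHermitian := by
  have : ((1 : Matrix (Fin D) (Fin D) ℝ) - η • hessE L θs)ᴴ
      = (1 : Matrix (Fin D) (Fin D) ℝ) - η • hessE L θs := by
    ext i j
    simp only [Matrix.conjTranspose_apply, Matrix.sub_apply, Matrix.smul_apply, Matrix.one_apply,
      star_trivial, smul_eq_mul]
    rw [hessE_symm L hL θs j i]
    congr 1
    simp [eq_comm]
  exact this

private lemma eucl_norm_mono (w w' : EuclideanSpace ℝ (Fin D)) (h : ∀ i, |w i| ≤ |w' i|) :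
    ‖w‖ ≤ ‖w'‖ := by
  rw [EuclideanSpace.norm_eq, EuclideanSpace.norm_eq]
  apply Real.sqrt_le_sqrt
  apply Finset.sum_le_sum
  intro i _
  rw [Real.norm_eq_abs, Real.norm_eq_abs]
  exact pow_le_pow_left₀ (abs_nonneg _) (h i) 2

private lemma diag_norm_bound (b : OrthonormalBasis (Fin D) ℝ (EuclideanSpace ℝ (Fin D)))
    (T : EuclideanSpace ℝ (Fin D) → EuclideanSpace ℝ (Fin D)) (μ : Fin D → ℝ)
    (hdiag : ∀ x i, b.repr (T x) i = μ i * b.repr x i) {ρ : ℝ}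
    (hμ : ∀ i, |μ i| ≤ ρ) (hρ : 0 ≤ ρ) (x : EuclideanSpace ℝ (Fin D)) :
    ‖T x‖ ≤ ρ * ‖x‖ := by
  rw [← b.repr.norm_map (T x), ← b.repr.norm_map x]
  have h1 : ‖b.repr (T x)‖ ≤ ‖ρ • b.repr x‖ := by
    apply eucl_norm_mono
    intro i
    rw [hdiag]
    have h2 : (ρ • b.repr x) i = ρ * b.repr x i := rfl
    rw [h2, abs_mul, abs_mul]
    apply mul_le_mul_of_nonneg_right _ (abs_nonneg _)
    exact (hμ i).trans (le_abs_self ρ)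
  calc ‖b.repr (T x)‖ ≤ ‖ρ • b.repr x‖ := h1
    _ = ρ * ‖b.repr x‖ := by rw [norm_smul, Real.norm_eq_abs, abs_of_nonneg hρ]

end AuxLemmas

set_option maxHeartbeats 2000000 in
set_option synthInstance.maxHeartbeats 200000 in
open Pointwise in
/-- **Spectral stability and Milnor stability for gradient descent.**
At a strict local minimum `θ*` (zero gradient, positive definite Hessian) of a `C²` loss,
if the spectral radius of `Dφ(θ*) = I - η Hess L(θ*)` is `< 1` then `θ*` is locally
Milnor stable, and if `θ*` is locally Milnor stable then this spectral radius is `≤ 1`. -/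
theorem spectral_stability_and_milnor_stability
    (D : ℕ) (L : EuclideanSpace ℝ (Fin D) → ℝ) (hL : ContDiff ℝ 2 L)
    (η : ℝ) (hη : 0 < η)
    (φ : EuclideanSpace ℝ (Fin D) → EuclideanSpace ℝ (Fin D))
    (hφ : ∀ θ, φ θ = θ - η • gradient L θ)
    (θs : EuclideanSpace ℝ (Fin D))
    (hcrit : gradient L θs = 0) (hpos : (hessE L θs).PosDef) :
    (matSpecRad ((1 : Matrix (Fin D) (Fin D) ℝ) - η • hessE L θs) < 1 →
      LocallyMilnorStable φ θs) ∧
    (LocallyMilnorStable φ θs →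
      matSpecRad ((1 : Matrix (Fin D) (Fin D) ℝ) - η • hessE L θs) ≤ 1) := by
  classical
  have hφfun : φ = fun θ => θ - η • gradient L θ := funext hφ
  subst hφfun
  set F : EuclideanSpace ℝ (Fin D) → EuclideanSpace ℝ (Fin D) :=
    fun θ => θ - η • gradient L θ with hFdef
  have hg : ContDiff ℝ 1 (gradient L) := grad_contDiff L hL
  have hF1 : ContDiff ℝ 1 F := contDiff_id.sub (hg.const_smul η)
  have hFd : ∀ x, HasFDerivAt F
      (ContinuousLinearMap.id ℝ (EuclideanSpace ℝ (Fin D)) - η • fderiv ℝ (gradient L) x) x := by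
    intro x
    have h1 : HasFDerivAt (gradient L) (fderiv ℝ (gradient L) x) x :=
      ((hg.differentiable one_ne_zero) x).hasFDerivAt
    exact (hasFDerivAt_id x).sub (h1.const_smul η)
  have hfd : ∀ x, fderiv ℝ F x
      = ContinuousLinearMap.id ℝ (EuclideanSpace ℝ (Fin D)) - η • fderiv ℝ (gradient L) x :=
    fun x => (hFd x).fderiv
  set M : Matrix (Fin D) (Fin D) ℝ := (1 : Matrix (Fin D) (Fin D) ℝ) - η • hessE L θs with hMdef
  have hM : M.IsHermitian := M_herm L hL θs η
  set Tc : EuclideanSpace ℝ (Fin D) →L[ℝ] EuclideanSpace ℝ (Fin D) := fderiv ℝ F θs with hTc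
  have hTcapp : ∀ w, Tc w = (WithLp.equiv 2 _).symm (M.mulVec w) := by
    intro w
    rw [hTc, hfd]
    simp only [ContinuousLinearMap.sub_apply, ContinuousLinearMap.smul_apply,
      ContinuousLinearMap.coe_id', id_eq]
    exact phi_matrix L hL θs η w
  have key : ∃ (b : OrthonormalBasis (Fin D) ℝ (EuclideanSpace ℝ (Fin D))) (μ : Fin D → ℝ),
      (∀ x i, b.repr (Tc x) i = μ i * b.repr x i) ∧
      (∀ i, |μ i| ≤ matSpecRad M) ∧
      (∀ s : ℝ, 0 ≤ s → (∀ i, |μ i| ≤ s) → matSpecRad M ≤ s) :=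
    ⟨hM.eigenvectorBasis, hM.eigenvalues,
      fun x i => by rw [hTcapp]; exact herm_repr M hM x i,
      fun i => matSpecRad_ge M hM i,
      fun s hs h => matSpecRad_le M hM hs h⟩
  obtain ⟨b, μ, hdiag, hμge, hμle⟩ := key
  have hρ0 : 0 ≤ matSpecRad M := by
    apply Real.sSup_nonneg
    rintro x ⟨z, _, rfl⟩
    exact norm_nonneg _
  have hfix : F θs = θs := by
    show θs - η • gradient L θs = θs
    rw [hcrit]; simp
  constructor
  · -- spectral radius < 1 implies Milnor stability
    intro hρ U hU hθU
    set c := (1 + matSpecRad M)/2 with hc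
    have hc1 : c < 1 := by rw [hc]; linarith
    have hρc : matSpecRad M < c := by rw [hc]; linarith
    have hc0 : 0 ≤ c := by rw [hc]; linarith
    have hTnorm : ∀ x, ‖Tc x‖ ≤ matSpecRad M * ‖x‖ :=
      diag_norm_bound b (⇑Tc) μ hdiag hμge hρ0
    have hTop : ‖Tc‖ ≤ matSpecRad M := ContinuousLinearMap.opNorm_le_bound _ hρ0 hTnorm
    have hcont : Continuous fun x => ‖fderiv ℝ F x‖ := (hF1.continuous_fderiv one_ne_zero).norm
    have hVopen : IsOpen (U ∩ {x | ‖fderiv ℝ F x‖ < c}) :=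
      hU.inter (isOpen_lt hcont continuous_const)
    have hθV : θs ∈ U ∩ {x | ‖fderiv ℝ F x‖ < c} := by
      refine ⟨hθU, ?_⟩
      show ‖fderiv ℝ F θs‖ < c
      rw [← hTc]
      exact lt_of_le_of_lt hTop hρc
    obtain ⟨r, hr0, hrsub⟩ := (Metric.nhds_basis_closedBall.mem_iff).mp (hVopen.mem_nhds hθV)
    have hcontr : ∀ x ∈ Metric.closedBall θs r, ‖F x - F θs‖ ≤ c * ‖x - θs‖ := by
      intro x hx
      exact Convex.norm_image_sub_le_of_norm_fderiv_le
        (fun y _ => (hF1.differentiable one_ne_zero).differentiableAt)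
        (fun y hy => le_of_lt (hrsub hy).2) (convex_closedBall θs r)
        (Metric.mem_closedBall_self hr0.le) hx
    have hiter : ∀ n : ℕ, ∀ x ∈ Metric.closedBall θs r,
        F^[n] x ∈ Metric.closedBall θs r ∧ ‖F^[n] x - θs‖ ≤ c^n * ‖x - θs‖ := by
      intro n
      induction n with
      | zero =>
        intro x hx
        exact ⟨by simpa using hx, by simp⟩
      | succ n ih =>
        intro x hx
        obtain ⟨hmem, hbd⟩ := ih x hx
        have hmem' : ‖F^[n] x - θs‖ ≤ r := by
          rw [← dist_eq_norm]; exact Metric.mem_closedBall.mp hmem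
        constructor
        · rw [Function.iterate_succ_apply', Metric.mem_closedBall, dist_eq_norm]
          calc ‖F (F^[n] x) - θs‖ = ‖F (F^[n] x) - F θs‖ := by rw [hfix]
            _ ≤ c * ‖F^[n] x - θs‖ := hcontr _ hmem
            _ ≤ c * r := mul_le_mul_of_nonneg_left hmem' hc0
            _ ≤ r := mul_le_of_le_one_left hr0.le hc1.le
        · rw [Function.iterate_succ_apply']
          calc ‖F (F^[n] x) - θs‖ = ‖F (F^[n] x) - F θs‖ := by rw [hfix]
            _ ≤ c * ‖F^[n] x - θs‖ := hcontr _ hmem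
            _ ≤ c * (c ^ n * ‖x - θs‖) := mul_le_mul_of_nonneg_left hbd hc0
            _ = c ^ (n+1) * ‖x - θs‖ := by ring
    refine lt_of_lt_of_le (Metric.measure_closedBall_pos volume θs hr0) (measure_mono ?_)
    intro x hx
    refine ⟨(hrsub hx).1, fun n => (hrsub ((hiter n x hx).1)).1, ?_⟩
    rw [tendsto_iff_dist_tendsto_zero]
    refine squeeze_zero (g := fun n => c^n * ‖x - θs‖) (fun n => dist_nonneg) (fun n => ?_) ?_
    · rw [dist_eq_norm]; exact (hiter n x hx).2
    · simpa using (tendsto_pow_atTop_nhds_zero_of_lt_one hc0 hc1).mul_const ‖x - θs‖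
  · -- Milnor stability implies spectral radius ≤ 1
    intro hMil
    by_contra hρ
    push_neg at hρ
    have hex : ∃ i, 1 < |μ i| := by
      by_contra h
      push_neg at h
      exact absurd (hμle 1 zero_le_one h) (not_le.mpr hρ)
    obtain ⟨i₀, hi₀⟩ := hex
    set I : Finset (Fin D) := Finset.univ.filter (fun i => 1 < |μ i|) with hI
    have hi₀I : i₀ ∈ I := by rw [hI]; simp [hi₀]
    have hIne : ((I.image fun i => |μ i|)).Nonempty := ⟨|μ i₀|, Finset.mem_image_of_mem _ hi₀I⟩
    set t := (I.image fun i => |μ i|).min' hIne with ht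
    have ht1 : 1 < t := by
      have hmem : t ∈ I.image fun i => |μ i| := Finset.min'_mem _ _
      obtain ⟨i, hiI, hit⟩ := Finset.mem_image.mp hmem
      rw [← hit]
      exact (Finset.mem_filter.mp hiI).2
    have htle : ∀ i, 1 < |μ i| → t ≤ |μ i| := by
      intro i hi
      exact Finset.min'_le _ _ (Finset.mem_image_of_mem _ (by simp [hI, hi]))
    set ε := (t - 1)/4 with hε
    have hε0 : 0 < ε := by rw [hε]; linarith
    have hcont : Continuous fun x => ‖fderiv ℝ F x - Tc‖ :=
      ((hF1.continuous_fderiv one_ne_zero).sub continuous_const).norm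
    have hopen : IsOpen {x | ‖fderiv ℝ F x - Tc‖ < ε} := isOpen_lt hcont continuous_const
    have hθmem : θs ∈ {x | ‖fderiv ℝ F x - Tc‖ < ε} := by
      show ‖fderiv ℝ F θs - Tc‖ < ε
      rw [← hTc, sub_self, norm_zero]
      exact hε0
    obtain ⟨r, hr0, hrsub⟩ := (Metric.nhds_basis_closedBall.mem_iff).mp (hopen.mem_nhds hθmem)
    have hS := hMil (Metric.ball θs r) Metric.isOpen_ball (Metric.mem_ball_self hr0)
    set S := {θ₀ : EuclideanSpace ℝ (Fin D) | θ₀ ∈ Metric.ball θs r ∧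
      (∀ n : ℕ, F^[n] θ₀ ∈ Metric.ball θs r) ∧
      Tendsto (fun n => F^[n] θ₀) atTop (nhds θs)} with hSdef
    have hFc : Continuous F := hF1.continuous
    have hFnc : ∀ n : ℕ, Continuous (F^[n]) := fun n => hFc.iterate n
    have hSm : MeasurableSet S := by
      have h1 : S = Metric.ball θs r ∩ ((⋂ n : ℕ, F^[n] ⁻¹' Metric.ball θs r) ∩
          {θ₀ | Tendsto (fun n => F^[n] θ₀) atTop (nhds θs)}) := by
        ext x
        constructor
        · rintro ⟨ha, hb, hc⟩
          exact ⟨ha, Set.mem_iInter.mpr hb, hc⟩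
        · rintro ⟨ha, hb, hc⟩
          exact ⟨ha, fun n => Set.mem_iInter.mp hb n, hc⟩
      rw [h1]
      exact Metric.isOpen_ball.measurableSet.inter
        ((MeasurableSet.iInter fun n => (hFnc n).measurable Metric.isOpen_ball.measurableSet).inter
          (measurableSet_tendsto_fun (fun n => (hFnc n).measurable) measurable_const))
    have hSteinhaus := MeasureTheory.Measure.sub_mem_nhds_zero_of_addHaar_pos volume S hSm hS
    obtain ⟨δ, hδ0, hδ⟩ := Metric.mem_nhds_iff.mp hSteinhaus
    set x₀ := (δ/2) • (b i₀) with hx₀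
    have hvnorm : ‖b i₀‖ = 1 := b.orthonormal.1 i₀
    have hx₀norm : ‖x₀‖ = δ/2 := by
      rw [hx₀, norm_smul, hvnorm, Real.norm_eq_abs, abs_of_pos (by linarith), mul_one]
    have hx₀mem : x₀ ∈ S - S := hδ (by
      rw [Metric.mem_ball, dist_zero_right, hx₀norm]
      linarith)
    obtain ⟨p, hp, q, hq, hpq⟩ := Set.mem_sub.mp hx₀mem
    set uv : EuclideanSpace ℝ (Fin D) → EuclideanSpace ℝ (Fin D) := fun x =>
      (WithLp.equiv 2 _).symm (fun i => if 1 < |μ i| then b.repr x i else 0) with huv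
    set sv : EuclideanSpace ℝ (Fin D) → EuclideanSpace ℝ (Fin D) := fun x =>
      (WithLp.equiv 2 _).symm (fun i => if 1 < |μ i| then 0 else b.repr x i) with hsv
    have huve : ∀ x i, uv x i = if 1 < |μ i| then b.repr x i else 0 := fun x i => rfl
    have hsve : ∀ x i, sv x i = if 1 < |μ i| then 0 else b.repr x i := fun x i => rfl
    have huv_add : ∀ x y, uv (x + y) = uv x + uv y := by
      intro x y; ext i
      have h2 : (uv x + uv y) i = uv x i + uv y i := rfl
      rw [h2, huve, huve, huve, map_add]
      have h3 : (b.repr x + b.repr y) i = b.repr x i + b.repr y i := rfl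
      rw [h3]
      by_cases h : 1 < |μ i| <;> simp [h]
    have hsv_add : ∀ x y, sv (x + y) = sv x + sv y := by
      intro x y; ext i
      have h2 : (sv x + sv y) i = sv x i + sv y i := rfl
      rw [h2, hsve, hsve, hsve, map_add]
      have h3 : (b.repr x + b.repr y) i = b.repr x i + b.repr y i := rfl
      rw [h3]
      by_cases h : 1 < |μ i| <;> simp [h]
    have huv_le : ∀ x, ‖uv x‖ ≤ ‖x‖ := by
      intro x
      rw [← b.repr.norm_map x]
      apply eucl_norm_mono
      intro i
      rw [huve]
      by_cases h : 1 < |μ i| <;> simp [h]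
    have hsv_le : ∀ x, ‖sv x‖ ≤ ‖x‖ := by
      intro x
      rw [← b.repr.norm_map x]
      apply eucl_norm_mono
      intro i
      rw [hsve]
      by_cases h : 1 < |μ i| <;> simp [h]
    have hnorm_le : ∀ x, ‖x‖ ≤ ‖uv x‖ + ‖sv x‖ := by
      intro x
      have hdec : uv x + sv x = b.repr x := by
        ext i
        have h2 : (uv x + sv x) i = uv x i + sv x i := rfl
        rw [h2, huve, hsve]
        by_cases h : 1 < |μ i| <;> simp [h]
      calc ‖x‖ = ‖b.repr x‖ := (b.repr.norm_map x).symm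
        _ = ‖uv x + sv x‖ := by rw [hdec]
        _ ≤ ‖uv x‖ + ‖sv x‖ := norm_add_le _ _
    have huvT : ∀ x, t * ‖uv x‖ ≤ ‖uv (Tc x)‖ := by
      intro x
      have h1 : ‖t • uv x‖ ≤ ‖uv (Tc x)‖ := by
        apply eucl_norm_mono
        intro i
        have h2 : (t • uv x) i = t * uv x i := rfl
        rw [h2, huve, huve, hdiag]
        by_cases h : 1 < |μ i|
        · simp only [h, if_true]
          rw [abs_mul, abs_mul, abs_of_pos (by linarith : (0:ℝ) < t)]
          exact mul_le_mul_of_nonneg_right (htle i h) (abs_nonneg _)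
        · simp [h]
      calc t * ‖uv x‖ = ‖t • uv x‖ := by
            rw [norm_smul, Real.norm_eq_abs, abs_of_pos (by linarith : (0:ℝ) < t)]
        _ ≤ ‖uv (Tc x)‖ := h1
    have hsvT : ∀ x, ‖sv (Tc x)‖ ≤ ‖sv x‖ := by
      intro x
      apply eucl_norm_mono
      intro i
      rw [hsve, hsve, hdiag]
      by_cases h : 1 < |μ i|
      · simp [h]
      · simp only [h, if_false]
        rw [abs_mul]
        push_neg at h
        exact mul_le_of_le_one_left (abs_nonneg _) h
    have haux : ∀ A B : EuclideanSpace ℝ (Fin D), ‖A‖ - ‖B‖ ≤ ‖A + B‖ := by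
      intro A B
      have h1 : ‖A‖ = ‖(A + B) - B‖ := by congr 1; abel
      have h2 : ‖(A + B) - B‖ ≤ ‖A + B‖ + ‖B‖ := norm_sub_le _ _
      rw [← h1] at h2
      linarith
    have herr : ∀ x ∈ Metric.closedBall θs r, ∀ y ∈ Metric.closedBall θs r,
        ‖F x - F y - Tc (x - y)‖ ≤ ε * ‖x - y‖ := by
      intro x hx y hy
      have hGd : ∀ y', DifferentiableAt ℝ (fun z => F z - Tc z) y' := fun y' =>
        ((hF1.differentiable one_ne_zero) y').sub Tc.differentiableAt
      have hGf : ∀ y' ∈ Metric.closedBall θs r,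
          ‖fderiv ℝ (fun z => F z - Tc z) y'‖ ≤ ε := by
        intro y' hy'
        rw [fderiv_fun_sub ((hF1.differentiable one_ne_zero) y') Tc.differentiableAt, Tc.fderiv]
        exact le_of_lt (hrsub hy')
      have h1 := Convex.norm_image_sub_le_of_norm_fderiv_le (fun z _ => hGd z) hGf
        (convex_closedBall θs r) hy hx
      have h2 : (F x - Tc x) - (F y - Tc y) = F x - F y - Tc (x - y) := by
        rw [map_sub]; abel
      rwa [h2] at h1
    set Δ : ℕ → EuclideanSpace ℝ (Fin D) := fun n => F^[n] p - F^[n] q with hΔ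
    have hΔ0 : Δ 0 = x₀ := by simp [hΔ, hpq]
    have hrepr0 : b.repr x₀ = (δ/2) • EuclideanSpace.single i₀ (1:ℝ) := by
      rw [hx₀, _root_.map_smul, b.repr_self i₀]
    have huv0 : uv x₀ = b.repr x₀ := by
      ext i
      rw [huve, hrepr0]
      have h2 : ((δ/2) • EuclideanSpace.single i₀ (1:ℝ)) i
          = (δ/2) * (EuclideanSpace.single i₀ (1:ℝ)) i := rfl
      by_cases h : 1 < |μ i|
      · simp [h]
      · simp only [h, if_false]
        rw [h2, EuclideanSpace.single_apply]
        have hii : i ≠ i₀ := fun hii => h (hii ▸ hi₀)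
        simp [hii]
    have huv0n : ‖uv x₀‖ = δ/2 := by
      rw [huv0, show ‖b.repr x₀‖ = ‖x₀‖ from b.repr.norm_map x₀]
      exact hx₀norm
    have hsv0 : sv x₀ = 0 := by
      ext i
      rw [hsve, hrepr0]
      by_cases h : 1 < |μ i|
      · simp [h]
      · simp only [h, if_false]
        have h2 : ((δ/2) • EuclideanSpace.single i₀ (1:ℝ)) i
            = (δ/2) * (EuclideanSpace.single i₀ (1:ℝ)) i := rfl
        rw [h2, EuclideanSpace.single_apply]
        have hii : i ≠ i₀ := fun hii => h (hii ▸ hi₀)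
        simp [hii]
    have hgrow : ∀ n : ℕ, ‖sv (Δ n)‖ ≤ ‖uv (Δ n)‖ ∧ ((t+1)/2)^n * (δ/2) ≤ ‖uv (Δ n)‖ := by
      intro n
      induction n with
      | zero =>
        rw [hΔ0]
        constructor
        · rw [hsv0, huv0n]
          simp
          linarith
        · rw [huv0n]
          simp
      | succ n ih =>
        obtain ⟨h1, h2⟩ := ih
        have hpn : F^[n] p ∈ Metric.closedBall θs r :=
          Metric.ball_subset_closedBall (hp.2.1 n)
        have hqn : F^[n] q ∈ Metric.closedBall θs r :=
          Metric.ball_subset_closedBall (hq.2.1 n)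
        have hΔn : Δ n = F^[n] p - F^[n] q := rfl
        have h3 : Δ (n+1) = F (F^[n] p) - F (F^[n] q) := by
          show F^[n+1] p - F^[n+1] q = _
          rw [Function.iterate_succ_apply', Function.iterate_succ_apply']
        have hΔsucc : Δ (n+1) = Tc (Δ n) + (F (F^[n] p) - F (F^[n] q) - Tc (Δ n)) := by
          rw [h3]; abel
        have heb : ‖F (F^[n] p) - F (F^[n] q) - Tc (Δ n)‖ ≤ ε * ‖Δ n‖ := by
          rw [hΔn]
          exact herr _ hpn _ hqn
        have hab : ‖Δ n‖ ≤ 2 * ‖uv (Δ n)‖ := by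
          have h4 := hnorm_le (Δ n); linarith
        have heb2 : ‖F (F^[n] p) - F (F^[n] q) - Tc (Δ n)‖ ≤ 2 * ε * ‖uv (Δ n)‖ := by
          calc ‖F (F^[n] p) - F (F^[n] q) - Tc (Δ n)‖ ≤ ε * ‖Δ n‖ := heb
            _ ≤ ε * (2 * ‖uv (Δ n)‖) := mul_le_mul_of_nonneg_left hab hε0.le
            _ = 2 * ε * ‖uv (Δ n)‖ := by ring
        have hulow : ((t+1)/2) * ‖uv (Δ n)‖ ≤ ‖uv (Δ (n+1))‖ := by
          have h4 : uv (Δ (n+1)) = uv (Tc (Δ n)) + uv (F (F^[n] p) - F (F^[n] q) - Tc (Δ n)) := by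
            rw [hΔsucc, huv_add]
          have h5 : ‖uv (Tc (Δ n))‖ - ‖uv (F (F^[n] p) - F (F^[n] q) - Tc (Δ n))‖
              ≤ ‖uv (Δ (n+1))‖ := by
            rw [h4]; exact haux _ _
          have h6 : ‖uv (F (F^[n] p) - F (F^[n] q) - Tc (Δ n))‖ ≤ 2 * ε * ‖uv (Δ n)‖ :=
            (huv_le _).trans heb2
          have h7 := huvT (Δ n)
          have h10 : ((t+1)/2) * ‖uv (Δ n)‖ = t * ‖uv (Δ n)‖ - 2*ε*‖uv (Δ n)‖ := by
            rw [hε]; ring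
          linarith [h5, h6, h7]
        have hsup : ‖sv (Δ (n+1))‖ ≤ ((t+1)/2) * ‖uv (Δ n)‖ := by
          have h4 : sv (Δ (n+1)) = sv (Tc (Δ n)) + sv (F (F^[n] p) - F (F^[n] q) - Tc (Δ n)) := by
            rw [hΔsucc, hsv_add]
          have h5 : ‖sv (Δ (n+1))‖
              ≤ ‖sv (Tc (Δ n))‖ + ‖sv (F (F^[n] p) - F (F^[n] q) - Tc (Δ n))‖ := by
            rw [h4]; exact norm_add_le _ _
          have h6 : ‖sv (F (F^[n] p) - F (F^[n] q) - Tc (Δ n))‖ ≤ 2 * ε * ‖uv (Δ n)‖ :=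
            (hsv_le _).trans heb2
          have h7 := hsvT (Δ n)
          have h10 : ((t+1)/2) * ‖uv (Δ n)‖ = ‖uv (Δ n)‖ + 2*ε*‖uv (Δ n)‖ := by
            rw [hε]; ring
          linarith [h5, h6, h7, h1]
        refine ⟨hsup.trans hulow, ?_⟩
        calc ((t+1)/2)^(n+1) * (δ/2) = ((t+1)/2) * (((t+1)/2)^n * (δ/2)) := by ring
          _ ≤ ((t+1)/2) * ‖uv (Δ n)‖ := mul_le_mul_of_nonneg_left h2 (by linarith)
          _ ≤ ‖uv (Δ (n+1))‖ := hulow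
    have hbound : ∀ n : ℕ, ‖uv (Δ n)‖ ≤ 2*r := by
      intro n
      have h6 : Δ n = (F^[n] p - θs) - (F^[n] q - θs) := by
        show F^[n] p - F^[n] q = _
        abel
      have h7 : ‖F^[n] p - θs‖ ≤ r := by
        rw [← dist_eq_norm]
        exact (Metric.mem_ball.mp (hp.2.1 n)).le
      have h8 : ‖F^[n] q - θs‖ ≤ r := by
        rw [← dist_eq_norm]
        exact (Metric.mem_ball.mp (hq.2.1 n)).le
      have h5 : ‖Δ n‖ ≤ 2*r := by
        rw [h6]
        calc ‖(F^[n] p - θs) - (F^[n] q - θs)‖ ≤ ‖F^[n] p - θs‖ + ‖F^[n] q - θs‖ :=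
              norm_sub_le _ _
          _ ≤ 2*r := by linarith
      exact le_trans (huv_le _) h5
    obtain ⟨n, hn⟩ := pow_unbounded_of_one_lt ((2*r)/(δ/2)) (by linarith : (1:ℝ) < (t+1)/2)
    have h9 : 2*r < ((t+1)/2)^n * (δ/2) := by
      rw [div_lt_iff₀ (by linarith : (0:ℝ) < δ/2)] at hn
      linarith
    linarith [hbound n, (hgrow n).2]
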